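/- Let k ≥ 1 robots have maximum speed v_max > 0, and suppose at a search state there remain finitely many objects where object i requires total travel distance at least d_i ≥ 0 for whichever robot retrieves it (each object is retrieved by exactly one robot, and a robot covers distance at most v_max·τ in time τ). Then the heuristic value H = (Σ_i d_i) / (k · v_max) never exceeds the true remaining makespan: for any schedule completing all remaining retrievals with makespan M, one has H ≤ M. -/

import Mathlib

open Finset

theorem Finset.sum_le_card_nsmul_of_sum_fiberwise_le {ι κ M : Type*} [Fintype ι] [Fintype κ]
    [DecidableEq κ] [AddCommMonoid M] [PartialOrder M] [IsOrderedAddMonoid M]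
    (f : ι → M) (g : ι → κ) (B : M) (h : ∀ j, ∑ i with g i = j, f i ≤ B) :
    ∑ i, f i ≤ Fintype.card κ • B := calc
  ∑ i, f i = ∑ j, ∑ i with g i = j, f i := (sum_fiberwise univ g f).symm
  _ ≤ Fintype.card κ • B := sum_le_card_nsmul univ _ B fun j _ => h j

theorem mrcr_heuristic_admissible_general {k : ℕ} (hk : 1 ≤ k) (vmax : ℝ)
    (hv : 0 < vmax) {ι : Type} [Fintype ι] (d : ι → ℝ)
    (a : ι → Fin k) (M : ℝ)
    (hM : ∀ j : Fin k,
      ∑ i ∈ Finset.univ.filter (fun i => a i = j), d i ≤ vmax * M) :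
    (∑ i, d i) / (k * vmax) ≤ M := by
  have hk' : (0 : ℝ) < k := by exact_mod_cast hk
  rw [div_le_iff₀ (by positivity)]
  calc ∑ i, d i ≤ Fintype.card (Fin k) • (vmax * M) :=
        sum_le_card_nsmul_of_sum_fiberwise_le d a _ hM
    _ = M * (k * vmax) := by rw [Fintype.card_fin, nsmul_eq_mul]; ring

/-- Admissibility of the A* heuristic: with `k ≥ 1` robots of maximum speed
`vmax > 0`, if each remaining object `i` requires travel distance at least
`d i ≥ 0` from whichever robot retrieves it, then for any schedule (an
assignment `a` of each object to exactly one robot) completing all retrievals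
with makespan `M` — so each robot's total assigned distance is at most
`vmax · M` — the heuristic `H = (∑ i, d i) / (k · vmax)` satisfies `H ≤ M`. -/
theorem mrcr_heuristic_admissible {k : ℕ} (hk : 1 ≤ k) (vmax : ℝ)
    (hv : 0 < vmax) {ι : Type} [Fintype ι] (d : ι → ℝ) (hd : ∀ i, 0 ≤ d i)
    (a : ι → Fin k) (M : ℝ)
    (hM : ∀ j : Fin k,
      ∑ i ∈ Finset.univ.filter (fun i => a i = j), d i ≤ vmax * M) :
    (∑ i, d i) / (k * vmax) ≤ M :=
  mrcr_heuristic_admissible_general hk vmax hv d a M hM
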